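/- arXiv:math/0001190 — 2 statements merged into one kernel-verified Lean document; each statement's English description precedes it below -/
import Mathlib

section
/- Let a_1, ..., a_n be a symmetric sequence of positive integers with continued fraction convergents P_i/Q_i of [0; a_1, ..., a_n], with P_{n-1}Q_{n-1} even, n odd, and let t be a positive integer large enough that a_0 := -Q_{n-1}P_{n-1}/2 + t*Q_n > 0. Define D(t) := a_0^2 + 2t*P_n - P_{n-1}^2. Then with C := a_0*Q_n + P_n and H := Q_n, one has C^2 - D(t)*H^2 = 1. -/
open Matrix in
lemma cf_matrix_prod (n : ℕ) (hn : 1 ≤ n) (a P Q : ℕ → ℤ)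
    (hP0 : P 0 = 0) (hP1 : P 1 = 1) (hQ0 : Q 0 = 1) (hQ1 : Q 1 = a 1)
    (hPrec : ∀ k, k + 2 ≤ n → P (k + 2) = a (k + 2) * P (k + 1) + P k)
    (hQrec : ∀ k, k + 2 ≤ n → Q (k + 2) = a (k + 2) * Q (k + 1) + Q k) :
    ((List.range n).map (fun i => !![a (i+1), 1; 1, 0])).prod
      = !![Q n, Q (n-1); P n, P (n-1)] := by
  induction n with
  | zero => omega
  | succ m ih =>
    rcases Nat.eq_zero_or_pos m with hm | hm
    · subst hm
      simp [List.range_succ, hP0, hP1, hQ0, hQ1]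
    · obtain ⟨j, rfl⟩ : ∃ j, m = j + 1 := ⟨m - 1, by omega⟩
      rw [List.range_succ, List.map_append, List.prod_append]
      rw [ih hm (fun k hk => hPrec k (hk.trans (Nat.le_succ _)))
            (fun k hk => hQrec k (hk.trans (Nat.le_succ _)))]
      simp only [List.map_cons, List.map_nil, List.prod_cons, List.prod_nil, mul_one]
      rw [Matrix.mul_fin_two]
      have hp := hPrec j le_rfl
      have hq := hQrec j le_rfl
      simp only [Nat.add_sub_cancel]
      ext r c
      fin_cases r <;> fin_cases c <;>
        simp [hp, hq] <;> ring

lemma cf_det (n : ℕ) (hn : 1 ≤ n) (a P Q : ℕ → ℤ)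
    (hP0 : P 0 = 0) (hP1 : P 1 = 1) (hQ0 : Q 0 = 1) (hQ1 : Q 1 = a 1)
    (hPrec : ∀ k, k + 2 ≤ n → P (k + 2) = a (k + 2) * P (k + 1) + P k)
    (hQrec : ∀ k, k + 2 ≤ n → Q (k + 2) = a (k + 2) * Q (k + 1) + Q k) :
    P n * Q (n - 1) - P (n - 1) * Q n = (-1) ^ (n - 1) := by
  induction n with
  | zero => omega
  | succ m ih =>
    rcases Nat.eq_zero_or_pos m with hm | hm
    · subst hm; simp [hP0, hP1, hQ0, hQ1]
    · obtain ⟨j, rfl⟩ : ∃ j, m = j + 1 := ⟨m - 1, by omega⟩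
      have hih := ih hm (fun k hk => hPrec k (hk.trans (Nat.le_succ _)))
            (fun k hk => hQrec k (hk.trans (Nat.le_succ _)))
      have hp := hPrec j le_rfl
      have hq := hQrec j le_rfl
      simp only [Nat.add_sub_cancel] at hih ⊢
      have h2 : j + 1 + 1 = j + 2 := rfl
      rw [h2, hp, hq]
      have : (-1 : ℤ) ^ (j + 1) = -(-1) ^ j := by ring
      rw [this, ← hih]
      ring

/-- For n odd, with `a₀ = -Q (n-1)·P (n-1)/2 + t·Q n > 0` (t a positive integer),
`D = a₀² + 2·t·P n - P (n-1)²`, `C = a₀·Q n + P n` and `H = Q n` satisfy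
`C² - D·H² = 1`. -/
theorem pell_pos_one_n_odd
    (n : ℕ) (hn : 1 ≤ n) (a P Q : ℕ → ℤ)
    (hapos : ∀ i, 1 ≤ i → i ≤ n → 0 < a i)
    (hsym : ∀ i, 1 ≤ i → i ≤ n → a i = a (n + 1 - i))
    (hP0 : P 0 = 0) (hP1 : P 1 = 1)
    (hQ0 : Q 0 = 1) (hQ1 : Q 1 = a 1)
    (hPrec : ∀ k, k + 2 ≤ n → P (k + 2) = a (k + 2) * P (k + 1) + P k)
    (hQrec : ∀ k, k + 2 ≤ n → Q (k + 2) = a (k + 2) * Q (k + 1) + Q k)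
    (hno : Odd n) (heven : Even (P (n - 1) * Q (n - 1)))
    (t a0 : ℤ) (ht : 0 < t)
    (ha0def : 2 * a0 = -(Q (n - 1) * P (n - 1)) + 2 * (t * Q n))
    (ha0pos : 0 < a0) :
    (a0 * Q n + P n) ^ 2 -
      (a0 ^ 2 + 2 * t * P n - P (n - 1) ^ 2) * (Q n) ^ 2 = 1 := by
  have hprod := cf_matrix_prod n hn a P Q hP0 hP1 hQ0 hQ1 hPrec hQrec
  -- symmetry: the list is equal to its reverse
  have hrev : ((List.range n).map (fun i => !![a (i+1), (1:ℤ); 1, 0])).reverse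
      = (List.range n).map (fun i => !![a (i+1), (1:ℤ); 1, 0]) := by
    apply List.ext_getElem
    · simp
    · intro i h1 h2
      simp only [List.getElem_reverse, List.getElem_map, List.getElem_range,
        List.length_map, List.length_range] at h1 h2 ⊢
      congr 1
      have hi : i < n := by simpa using h2
      have := hsym (i + 1) (by omega) (by omega)
      have h3 : n - 1 - i + 1 = n + 1 - (i + 1) := by omega
      rw [h3, ← this]
  -- transpose symmetry gives P n = Q (n-1)
  have htr := Matrix.transpose_list_prod ((List.range n).map (fun i => !![a (i+1), (1:ℤ); 1, 0]))
  have hmapsym : ((List.range n).map (fun i => !![a (i+1), (1:ℤ); 1, 0])).map Matrix.transpose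
      = (List.range n).map (fun i => !![a (i+1), (1:ℤ); 1, 0]) := by
    rw [List.map_map]
    apply List.map_congr_left
    intro i _
    ext r c
    fin_cases r <;> fin_cases c <;> simp [Matrix.transpose]
  rw [hmapsym, hrev, hprod] at htr
  have hPn : P n = Q (n - 1) := by
    have := congrFun (congrFun htr 1) 0
    simpa [Matrix.transpose_apply] using this.symm
  have hdet := cf_det n hn a P Q hP0 hP1 hQ0 hQ1 hPrec hQrec
  obtain ⟨m, hm⟩ := hno
  have hn1 : n - 1 = 2 * m := by omega
  rw [hn1] at hdet
  have hdet1 : P n * Q (n - 1) - P (n - 1) * Q n = 1 := by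
    rw [hn1]
    rw [hdet]
    simp [pow_mul]
  rw [hPn] at hdet1 ⊢
  linear_combination (Q n * Q (n-1)) * ha0def + (1 - P (n-1) * Q n) * hdet1
end

section
/- Define r(n) to be the number of symmetric zero-one sequences (a_1,...,a_n) of length n (i.e., a_i = a_{n+1-i}) such that the matrix product over ℤ/2ℤ of [[0,1],[1,0]] followed by [[a_i,1],[1,0]] for i = 1 to n does NOT have second column equal to (1,1)^T. Then r(2m) = ((-1)^m + 2^{m+1})/3 and r(2m+1) = ((-1)^m + 5*2^m)/3. -/
open Matrix in
/-- The number of permissible symmetric zero-one sequences of length `n`. -/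
noncomputable def permissibleCount (n : ℕ) : ℕ :=
  letI := Classical.decEq (Matrix (Fin 2) (Fin 2) (ZMod 2))
  letI := fun p : Prop => Classical.propDecidable p
  (Finset.univ.filter fun a : Fin n → ZMod 2 =>
    (∀ i j : Fin n, (i : ℕ) + (j : ℕ) = n - 1 → a i = a j) ∧
      ¬ (((!![(0 : ZMod 2), 1; 1, 0]) *
            (List.ofFn fun i : Fin n => !![a i, 1; 1, 0]).prod) 0 1 = 1 ∧
          ((!![(0 : ZMod 2), 1; 1, 0]) *
            (List.ofFn fun i : Fin n => !![a i, 1; 1, 0]).prod) 1 1 = 1)).card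

/-!
Write `P(a)` (`cfProd a`) for the product over `𝔽₂` of the matrices `M aᵢ = !![aᵢ, 1; 1, 0]`.
The leading factor `!![0, 1; 1, 0]` swaps rows, so a sequence is rejected exactly when the second
column of `P(a)` is `(1, 1)`. For a palindrome `P(a)` is symmetric (each factor is, and
transposing reverses the product) of determinant `1`, and the only such matrix with second column
`(1, 1)` is `T = !![0, 1; 1, 1]`.

A palindrome of length `n + 2` is `x p x` with `p` a palindrome, and `P(x p x) = M x P(p) M x`.
Following `T`, `1` and `!![1, 1; 1, 0]` through these maps shows that the number `c n` of
palindromes with `P = T` satisfies `c (n + 4) = c (n + 2) + 2 c n`, with `c 0 = c 1 = 0` and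
`c 2 = c 3 = 1`; hence `c (2k) = c (2k + 1) = (2^k - (-1)^k) / 3`, a Jacobsthal number.
Subtracting it from the `2^⌈n/2⌉` palindromes gives the formula.
-/

open Finset Matrix

theorem List.reverse_ofFn {α : Type*} {n : ℕ} (f : Fin n → α) :
    (List.ofFn f).reverse = List.ofFn (f ∘ Fin.rev) := by
  rw [List.ofFn_eq_map, List.ofFn_eq_map, ← List.map_reverse, List.finRange_reverse, List.map_map]

section Palindrome

variable {α : Type*} {n : ℕ}

theorem comp_rev_eq_self_iff (a : Fin n → α) :
    a ∘ Fin.rev = a ↔ ∀ i j : Fin n, (i : ℕ) + j = n - 1 → a i = a j := by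
  constructor
  · intro h i j hij
    rw [show j = i.rev from Fin.ext (by rw [Fin.val_rev]; omega), ← congrFun h i]
    rfl
  · intro h
    funext i
    exact (h i i.rev (by rw [Fin.val_rev]; omega)).symm

theorem cons_snoc_comp_rev_eq_self_iff (x y : α) (p : Fin n → α) :
    (Fin.cons x (Fin.snoc p y : Fin (n + 1) → α) : Fin (n + 2) → α) ∘ Fin.rev =
        Fin.cons x (Fin.snoc p y : Fin (n + 1) → α) ↔ y = x ∧ p ∘ Fin.rev = p := by
  rw [Fin.cons_comp_rev, Fin.snoc_comp_rev, ← Fin.cons_snoc_eq_snoc_cons, Fin.cons_inj,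
    Fin.snoc_inj]
  tauto

theorem cons_snoc_init_tail (a : Fin (n + 2) → α) :
    (Fin.cons (a 0) (Fin.snoc (Fin.init (Fin.tail a)) (a (Fin.last _)) : Fin (n + 1) → α) :
      Fin (n + 2) → α) = a := by
  conv_rhs => rw [← Fin.cons_self_tail a, ← Fin.snoc_init_self (Fin.tail a)]
  rfl

theorem cons_snoc_init_tail_of_comp_rev_eq_self {a : Fin (n + 2) → α} (ha : a ∘ Fin.rev = a) :
    (Fin.cons (a 0) (Fin.snoc (Fin.init (Fin.tail a)) (a 0) : Fin (n + 1) → α) :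
        Fin (n + 2) → α) = a ∧
      Fin.init (Fin.tail a) ∘ Fin.rev = Fin.init (Fin.tail a) := by
  have hdecomp := cons_snoc_init_tail a
  obtain ⟨hlast, hinner⟩ := (cons_snoc_comp_rev_eq_self_iff _ _ _).mp (hdecomp ▸ ha)
  exact ⟨hlast ▸ hdecomp, hinner⟩

theorem List.prod_ofFn_cons_snoc {M : Type*} [Monoid M] (f : α → M) (x y : α) (p : Fin n → α) :
    (List.ofFn fun i =>
        f ((Fin.cons x (Fin.snoc p y : Fin (n + 1) → α) : Fin (n + 2) → α) i)).prod =
      f x * (List.ofFn fun i => f (p i)).prod * f y := by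
  rw [List.ofFn_succ, List.ofFn_succ']
  simp [mul_assoc]

variable [Fintype α] [DecidableEq α]

theorem card_palindromes_add_two (Q : (Fin (n + 2) → α) → Prop) [DecidablePred Q] :
    #{a : Fin (n + 2) → α | a ∘ Fin.rev = a ∧ Q a} =
      ∑ x, #{p : Fin n → α |
        p ∘ Fin.rev = p ∧ Q (Fin.cons x (Fin.snoc p x : Fin (n + 1) → α))} := by
  rw [card_eq_sum_card_fiberwise (f := fun a => a 0) (t := univ) (fun _ _ => mem_univ _)]
  refine sum_congr rfl fun x _ => ?_
  refine card_nbij' (fun a => Fin.init (Fin.tail a)) (fun p => Fin.cons x (Fin.snoc p x))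
    ?_ ?_ ?_ ?_
  · intro a ha
    simp only [coe_filter, mem_filter, mem_univ, true_and, Set.mem_ofPred_eq] at ha ⊢
    obtain ⟨⟨hpal, hQ⟩, rfl⟩ := ha
    obtain ⟨hdecomp, hinner⟩ := cons_snoc_init_tail_of_comp_rev_eq_self hpal
    exact ⟨hinner, by rwa [hdecomp]⟩
  · intro p hp
    simp only [coe_filter, mem_filter, mem_univ, true_and, Set.mem_ofPred_eq] at hp ⊢
    exact ⟨⟨(cons_snoc_comp_rev_eq_self_iff _ _ _).mpr ⟨rfl, hp.1⟩, hp.2⟩, rfl⟩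
  · intro a ha
    simp only [coe_filter, mem_filter, mem_univ, true_and, Set.mem_ofPred_eq] at ha
    obtain ⟨⟨hpal, -⟩, rfl⟩ := ha
    exact (cons_snoc_init_tail_of_comp_rev_eq_self hpal).1
  · intro p _
    simp

theorem card_palindromes (n : ℕ) :
    #{a : Fin n → α | a ∘ Fin.rev = a} = Fintype.card α ^ ((n + 1) / 2) := by
  induction n using Nat.twoStepInduction with
  | zero | one =>
    rw [filter_true_of_mem (p := fun a : Fin _ → α => a ∘ Fin.rev = a)
        fun a _ => funext fun i => congrArg a (Subsingleton.elim (Fin.rev i) i),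
      card_univ, Fintype.card_fun]
    simp
  | more n ih _ =>
    have := card_palindromes_add_two (n := n) (α := α) (fun _ => True)
    simp only [and_true] at this
    rw [this, ih, sum_const, card_univ, smul_eq_mul,
      show (n + 2 + 1) / 2 = (n + 1) / 2 + 1 by omega, pow_succ']

end Palindrome

local notation "M₂" => Matrix (Fin 2) (Fin 2) (ZMod 2)

def cfMatrix (x : ZMod 2) : M₂ := !![x, 1; 1, 0]

def cfProd {n : ℕ} (a : Fin n → ZMod 2) : M₂ := (List.ofFn fun i => cfMatrix (a i)).prod

def palCount (n : ℕ) (g : M₂) : ℕ := #{a : Fin n → ZMod 2 | a ∘ Fin.rev = a ∧ cfProd a = g}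

theorem transpose_cfProd {n : ℕ} (a : Fin n → ZMod 2) : (cfProd a)ᵀ = cfProd (a ∘ Fin.rev) := by
  have hsymm (x : ZMod 2) : (cfMatrix x)ᵀ = cfMatrix x := by
    ext i j; fin_cases i <;> fin_cases j <;> rfl
  simp only [cfProd, transpose_list_prod, List.map_ofFn, List.reverse_ofFn, Function.comp_def,
    hsymm]

theorem det_cfProd {n : ℕ} (a : Fin n → ZMod 2) : (cfProd a).det = 1 := by
  rw [cfProd, ← coe_detMonoidHom, map_list_prod, List.map_ofFn]
  refine List.prod_eq_one fun d hd => ?_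
  obtain ⟨i, rfl⟩ := List.mem_ofFn.mp hd
  simp only [Function.comp_apply, coe_detMonoidHom, cfMatrix, det_fin_two_of, mul_zero, one_mul,
    zero_sub]
  decide

theorem isSymm_cfProd {n : ℕ} {a : Fin n → ZMod 2} (ha : a ∘ Fin.rev = a) :
    (cfProd a).IsSymm := by
  rw [IsSymm, transpose_cfProd, ha]

theorem col_one_eq_one_iff_of_isSymm {P : M₂} (hsymm : P.IsSymm) (hdet : P.det = 1) :
    P 0 1 = 1 ∧ P 1 1 = 1 ↔ P = !![0, 1; 1, 1] := by
  constructor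
  · rintro ⟨h01, h11⟩
    have h10 : P 1 0 = 1 := (hsymm.apply 1 0).symm.trans h01
    have h00 : P 0 0 = 0 := by
      rw [det_fin_two, h01, h10, h11] at hdet
      revert hdet
      generalize P 0 0 = x
      revert x
      decide
    rw [eta_fin_two P, h00, h01, h10, h11]
  · rintro rfl
    exact ⟨rfl, rfl⟩

theorem cfProd_cons_snoc {n : ℕ} (x : ZMod 2) (p : Fin n → ZMod 2) :
    cfProd (Fin.cons x (Fin.snoc p x : Fin (n + 1) → ZMod 2) : Fin (n + 2) → ZMod 2) =
      cfMatrix x * cfProd p * cfMatrix x :=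
  List.prod_ofFn_cons_snoc cfMatrix x x p

theorem mul_mul_eq_iff {M : Type*} [Monoid M] {u v p g : M} (huv : u * v = 1) (hvu : v * u = 1) :
    u * p * u = g ↔ p = v * g * v := by
  constructor
  · rintro rfl
    calc p = v * u * p * (u * v) := by rw [hvu, huv, one_mul, mul_one]
      _ = v * (u * p * u) * v := by simp only [mul_assoc]
  · rintro rfl
    calc u * (v * g * v) * u = u * v * g * (v * u) := by simp only [mul_assoc]
      _ = g := by rw [huv, hvu, one_mul, mul_one]

/-- `!![0, 1; 1, 0]` and `!![0, 1; 1, 1]` are the inverses of `cfMatrix 0` and `cfMatrix 1`. -/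
theorem palCount_add_two (n : ℕ) (g : M₂) :
    palCount (n + 2) g =
      palCount n (!![0, 1; 1, 0] * g * !![0, 1; 1, 0]) +
        palCount n (!![0, 1; 1, 1] * g * !![0, 1; 1, 1]) := by
  rw [palCount, card_palindromes_add_two, show (univ : Finset (ZMod 2)) = {0, 1} from rfl,
    sum_pair zero_ne_one]
  refine congrArg₂ (· + ·) ?_ ?_ <;>
    refine congrArg card (filter_congr fun p _ => and_congr_right fun _ => ?_) <;>
    rw [cfProd_cons_snoc]
  exacts [mul_mul_eq_iff (by decide) (by decide), mul_mul_eq_iff (by decide) (by decide)]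

theorem permissibleCount_eq (n : ℕ) :
    permissibleCount n = #{a : Fin n → ZMod 2 | a ∘ Fin.rev = a ∧ cfProd a ≠ !![0, 1; 1, 1]} := by
  rw [permissibleCount]
  congr 1
  ext a
  simp only [mem_filter, mem_univ, true_and, ← comp_rev_eq_self_iff]
  refine and_congr_right fun ha => not_congr ?_
  rw [← col_one_eq_one_iff_of_isSymm (isSymm_cfProd ha) (det_cfProd a), and_comm]
  simp only [cfProd, cfMatrix, mul_apply, of_apply, cons_val', cons_val_fin_one, cons_val_one,
    cons_val_zero, Fin.sum_univ_two, one_mul, zero_mul, add_zero, zero_add]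
  -- `permissibleCount` multiplies matrices using a classical `DecidableEq (Fin 2)` instance.
  congr!

theorem permissibleCount_add_palCount (n : ℕ) :
    permissibleCount n + palCount n !![0, 1; 1, 1] = 2 ^ ((n + 1) / 2) := by
  have hsplit := card_filter_add_card_filter_not (s := {a : Fin n → ZMod 2 | a ∘ Fin.rev = a})
    (fun a => cfProd a = !![0, 1; 1, 1])
  rw [filter_filter, filter_filter, card_palindromes, ZMod.card] at hsplit
  rw [permissibleCount_eq, palCount, ← hsplit, add_comm]

theorem palCount_add_four (n : ℕ) :
    palCount (n + 4) !![0, 1; 1, 1] =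
      palCount (n + 2) !![0, 1; 1, 1] + 2 * palCount n !![0, 1; 1, 1] := by
  have hT (k : ℕ) :
      palCount (k + 2) !![0, 1; 1, 1] = palCount k !![1, 1; 1, 0] + palCount k 1 := by
    rw [palCount_add_two]; congr 2 <;> decide
  have hOne (k : ℕ) : palCount (k + 2) 1 = palCount k 1 + palCount k !![1, 1; 1, 0] := by
    rw [palCount_add_two]; congr 2 <;> decide
  have hU (k : ℕ) : palCount (k + 2) !![1, 1; 1, 0] = 2 * palCount k !![0, 1; 1, 1] := by
    rw [palCount_add_two, two_mul]; congr 2 <;> decide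
  rw [hT (n + 2), hU, hOne, hT n]
  ring

theorem three_mul_eq_two_pow_sub_neg_one_pow {d : ℕ → ℕ} (h0 : d 0 = 0) (h1 : d 1 = 1)
    (hrec : ∀ k, d (k + 2) = d (k + 1) + 2 * d k) (k : ℕ) : 3 * (d k : ℤ) = 2 ^ k - (-1) ^ k := by
  induction k using Nat.twoStepInduction with
  | zero => simp [h0]
  | one => norm_num [h1]
  | more k ih ih' =>
    rw [hrec]
    push_cast
    linear_combination ih' + 2 * ih

theorem three_mul_palCount (k : ℕ) {r : ℕ} (hr : r ≤ 1) :
    3 * (palCount (2 * k + r) !![0, 1; 1, 1] : ℤ) = 2 ^ k - (-1) ^ k := by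
  refine three_mul_eq_two_pow_sub_neg_one_pow (d := fun k => palCount (2 * k + r) _) ?_ ?_
    (fun k => ?_) k
  · interval_cases r <;> decide
  · interval_cases r <;> decide
  · rw [show 2 * (k + 2) + r = 2 * k + r + 4 by ring, palCount_add_four]
    ring_nf

/-- `r(2m) = ((-1)^m + 2^(m+1))/3` and `r(2m+1) = ((-1)^m + 5·2^m)/3`. -/
theorem permissibleCount_formula (m : ℕ) :
    3 * (permissibleCount (2 * m) : ℤ) = (-1) ^ m + 2 ^ (m + 1) ∧
      3 * (permissibleCount (2 * m + 1) : ℤ) = (-1) ^ m + 5 * 2 ^ m := by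
  have hEven := permissibleCount_add_palCount (2 * m)
  have hOdd := permissibleCount_add_palCount (2 * m + 1)
  rw [show (2 * m + 1) / 2 = m by omega] at hEven
  rw [show (2 * m + 1 + 1) / 2 = m + 1 by omega] at hOdd
  have hbadEven := three_mul_palCount m (r := 0) zero_le_one
  have hbadOdd := three_mul_palCount m (r := 1) le_rfl
  zify at hEven hOdd
  constructor
  · linear_combination 3 * hEven - hbadEven
  · linear_combination 3 * hOdd - hbadOdd
end
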